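/- Let H be a connected graph and x, y two distinct vertices of H. Let G be obtained from H by attaching a pendant edge (a new vertex joined by an edge) at y, and G' obtained from H by attaching a pendant edge at x. Then N(G') − N(G) = N(H)_x − N(H)_y = N(H−y)_x − N(H−x)_y. -/

import Mathlib

open SimpleGraph

/-- Number of (nonempty) connected induced subgraphs of `G`. -/
noncomputable def numCIS {V : Type*} (G : SimpleGraph V) : ℕ :=
  Nat.card {s : Finset V // s.Nonempty ∧ (G.induce (↑s : Set V)).Connected}

/-- Number of connected induced subgraphs of `G` containing the vertex `v`. -/
noncomputable def numCISat {V : Type*} (G : SimpleGraph V) (v : V) : ℕ :=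
  Nat.card {s : Finset V // v ∈ s ∧ (G.induce (↑s : Set V)).Connected}

/-- Number of connected induced subgraphs of `G` containing both `u` and `v`. -/
noncomputable def numCISat2 {V : Type*} (G : SimpleGraph V) (u v : V) : ℕ :=
  Nat.card {s : Finset V // u ∈ s ∧ v ∈ s ∧ (G.induce (↑s : Set V)).Connected}

/-- Attach a pendant path with `k` new vertices at the vertex `u` of `G`
(so the resulting pendant path "of order `k + 1`" starts at `u`). -/
def attachPath {V : Type*} (G : SimpleGraph V) (u : V) (k : ℕ) :
    SimpleGraph (V ⊕ Fin k) :=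
  SimpleGraph.fromRel (fun a b =>
    (∃ x y, a = Sum.inl x ∧ b = Sum.inl y ∧ G.Adj x y) ∨
    (∃ i j : Fin k, a = Sum.inr i ∧ b = Sum.inr j ∧ (i : ℕ) + 1 = (j : ℕ)) ∨
    (∃ h : 0 < k, a = Sum.inl u ∧ b = Sum.inr ⟨0, h⟩))

/-!
Sort the connected sets of `G_u` (the graph `H` with a leaf `p` attached at `u`) by how they
meet `p`: those avoiding `p` are the connected sets of `H`, then there is `{p}`, and any other
connected set through `p` is `p` together with a connected set of `H` containing `u`, since `u`
is the only neighbour of `p`. Hence `N(G_u) = N(H) + N(H)_u + 1`, which gives the first equality.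
For the second, split the connected sets through `x` by whether they contain `y`:
`N(H)_x = N(H)_{x,y} + N(H - y)_x`, and `N(H)_{x,y}` is symmetric in `x` and `y`.
-/

open Finset

section Counting

variable {α : Type*} [Finite α]

theorem natCard_subtype_and_add_natCard_subtype_and_not (P Q : α → Prop) :
    Nat.card {a // P a ∧ Q a} + Nat.card {a // P a ∧ ¬Q a} = Nat.card {a // P a} :=
  Set.ncard_inter_add_ncard_sdiff_eq_ncard {a | P a} {a | Q a}

theorem natCard_subtype_eq_or {R : α → Prop} {a : α} (ha : ¬R a) :
    Nat.card {x // x = a ∨ R x} = Nat.card {x // R x} + 1 :=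
  Set.ncard_insert_of_notMem (s := {x | R x}) ha

theorem natCard_finset_subtype_eq_add_insert [DecidableEq α] (a : α) (P : Finset α → Prop) :
    Nat.card {s // P s} =
      Nat.card {s // a ∉ s ∧ P s} + Nat.card {s // a ∉ s ∧ P (insert a s)} := by
  rw [← natCard_subtype_and_add_natCard_subtype_and_not P (a ∉ ·)]
  congr 1
  · exact Nat.card_congr (Equiv.subtypeEquivRight fun _ => and_comm)
  · refine Nat.card_congr
      { toFun s := ⟨s.1.erase a, notMem_erase a _, by
          rw [insert_erase (not_not.mp s.2.2)]
          exact s.2.1⟩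
        invFun s := ⟨insert a s.1, s.2.2, not_not.mpr (mem_insert_self a _)⟩
        left_inv s := Subtype.ext (insert_erase (not_not.mp s.2.2))
        right_inv s := Subtype.ext (erase_insert s.2.1) }

end Counting

noncomputable def Function.Embedding.finsetEquivSubsetRange {α β : Type*} (f : α ↪ β) :
    Finset α ≃ {s : Finset β // ↑s ⊆ Set.range f} where
  toFun t := ⟨t.map f, by simp⟩
  invFun s := s.1.preimage f f.injective.injOn
  left_inv t := by ext; simp
  right_inv s := Subtype.ext <| Finset.coe_injective <| by
    simpa using Set.image_preimage_eq_of_subset s.2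

namespace SimpleGraph

variable {V W : Type*} {G : SimpleGraph V} {G' : SimpleGraph W}

theorem Embedding.connected_induce_image_iff (f : G ↪g G') (s : Set V) :
    (G'.induce (f '' s)).Connected ↔ (G.induce s).Connected :=
  (Iso.connected_iff
    { toEquiv := Equiv.Set.image f s f.injective, map_rel_iff' := f.map_adj_iff }).symm

theorem Embedding.connected_induce_map_iff (f : G ↪g G') (t : Finset V) :
    (G'.induce ↑(t.map f.toEmbedding)).Connected ↔ (G.induce ↑t).Connected := by
  rw [coe_map]
  exact f.connected_induce_image_iff t

theorem Connected.induce_diff_singleton_of_neighborSet_subsingleton {S : Set V}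
    (hS : (G.induce S).Connected) {v : V}
    (hv : (G.neighborSet v).Subsingleton) (hne : (S \ {v}).Nonempty) :
    (G.induce (S \ {v})).Connected := by
  have hpre : ((G.induce S).induce {w : S | (w : V) ≠ v}).Preconnected :=
    hS.preconnected.induce_of_degree_eq_one fun w hw => by
      rw [neighborSet_induce]
      simp only [Set.mem_ofPred_eq, not_not] at hw
      exact (hw ▸ hv).preimage Subtype.val_injective
  have himage : (Embedding.induce S : G.induce S ↪g G) '' {w : S | (w : V) ≠ v} = S \ {v} := by
    ext; simp [and_comm]
  rw [← himage, Embedding.connected_induce_image_iff, connected_iff]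
  obtain ⟨w, hwS, hwv⟩ := hne
  exact ⟨hpre, ⟨⟨w, hwS⟩, hwv⟩⟩

theorem connected_induce_insert_iff_of_neighborSet_eq {p q : V} (hp : G.neighborSet p = {q})
    {S : Set V} (hpS : p ∉ S) :
    (G.induce (insert p S)).Connected ↔ S = ∅ ∨ q ∈ S ∧ (G.induce S).Connected := by
  have hpq : G.Adj p q := by simp [← mem_neighborSet, hp]
  constructor
  · intro hconn
    refine S.eq_empty_or_nonempty.imp_right fun ⟨a, ha⟩ => ⟨?_, ?_⟩
    · obtain ⟨w⟩ :=
        hconn.preconnected ⟨p, Set.mem_insert p S⟩ ⟨a, Set.mem_insert_of_mem p ha⟩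
      have hnil : ¬w.Nil := Walk.not_nil_of_ne fun h => by
        obtain rfl : p = a := congrArg Subtype.val h
        exact hpS ha
      have hsnd : G.Adj p w.snd := w.adj_snd hnil
      have hq : (w.snd : V) = q := by simpa [← mem_neighborSet, hp] using hsnd
      exact hq ▸ w.snd.2.resolve_left (G.ne_of_adj hsnd).symm
    · have hne : (insert p S \ {p}).Nonempty :=
        ⟨a, Set.mem_insert_of_mem p ha, fun h => hpS (h ▸ ha)⟩
      have := hconn.induce_diff_singleton_of_neighborSet_subsingleton
        (hp ▸ Set.subsingleton_singleton) hne
      rwa [Set.insert_sdiff_self_of_notMem hpS] at this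
  · rintro (rfl | ⟨hq, hS⟩)
    · rw [LawfulSingleton.insert_empty_eq, induce_singleton_eq_top]
      exact connected_top
    · rw [Set.insert_eq]
      exact connected_induce_union (by simp) hS.preconnected rfl hq hpq

theorem numCIS_eq_of_embedding (f : G ↪g G') :
    numCIS G =
      Nat.card {s : Finset W //
        ↑s ⊆ Set.range f ∧ s.Nonempty ∧ (G'.induce ↑s).Connected} :=
  Nat.card_congr <| (f.toEmbedding.finsetEquivSubsetRange.subtypeEquiv fun t => by
    simp [Function.Embedding.finsetEquivSubsetRange, f.connected_induce_map_iff]).trans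
    (Equiv.subtypeSubtypeEquivSubtypeInter _ _)

theorem numCISat_eq_of_embedding (f : G ↪g G') (v : V) :
    numCISat G v =
      Nat.card {s : Finset W //
        ↑s ⊆ Set.range f ∧ f v ∈ s ∧ (G'.induce ↑s).Connected} :=
  Nat.card_congr <| (f.toEmbedding.finsetEquivSubsetRange.subtypeEquiv fun t => by
    simp [Function.Embedding.finsetEquivSubsetRange, f.connected_induce_map_iff]).trans
    (Equiv.subtypeSubtypeEquivSubtypeInter _ _)

theorem numCIS_eq_of_neighborSet_eq [Finite W] (f : G ↪g G') {p : W} (v : V)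
    (hp : G'.neighborSet p = {f v}) (hrange : Set.range f = {p}ᶜ) :
    numCIS G' = numCIS G + numCISat G v + 1 := by
  classical
  have hsub (s : Finset W) : ↑s ⊆ Set.range f ↔ p ∉ s := by
    simp [hrange, Set.subset_compl_singleton_iff]
  have hinsert : Nat.card {s : Finset W // p ∉ s ∧ (insert p s).Nonempty ∧
      (G'.induce ↑(insert p s)).Connected} = numCISat G v + 1 := by
    rw [numCISat_eq_of_embedding f, ← natCard_subtype_eq_or (a := ∅) (by simp)]
    refine Nat.card_congr (Equiv.subtypeEquivRight fun s => ?_)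
    by_cases hps : p ∈ s
    · simp [hps, hsub, ne_empty_of_mem hps]
    · rw [coe_insert, connected_induce_insert_iff_of_neighborSet_eq hp (by simpa), hsub]
      simp [hps]
  rw [numCIS, natCard_finset_subtype_eq_add_insert p, hinsert, numCIS_eq_of_embedding f,
    ← add_assoc]
  congr 2
  exact Nat.card_congr (Equiv.subtypeEquivRight fun s => by rw [hsub])

end SimpleGraph

section AttachPath

variable {V : Type*} (H : SimpleGraph V) (u : V)

def attachPathEmbedding (k : ℕ) : H ↪g attachPath H u k where
  toEmbedding := .inl
  map_rel_iff' := by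
    intro a b
    simpa [attachPath, H.adj_comm] using H.ne_of_adj

theorem neighborSet_attachPath_one_inr :
    (attachPath H u 1).neighborSet (.inr 0) = {.inl u} := by
  ext (a | i) <;> simp [attachPath]

theorem range_attachPathEmbedding_one :
    Set.range (attachPathEmbedding H u 1) = {.inr 0}ᶜ := by
  ext (a | i) <;> simp [attachPathEmbedding, Fin.fin_one_eq_zero]

theorem numCIS_attachPath_one [Finite V] :
    numCIS (attachPath H u 1) = numCIS H + numCISat H u + 1 :=
  numCIS_eq_of_neighborSet_eq (attachPathEmbedding H u 1) u
    (neighborSet_attachPath_one_inr H u) (range_attachPathEmbedding_one H u)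

end AttachPath

section Deletion

variable {V : Type*} (H : SimpleGraph V)

theorem numCISat2_comm (x y : V) : numCISat2 H x y = numCISat2 H y x :=
  Nat.card_congr (Equiv.subtypeEquivRight fun _ => and_left_comm)

theorem numCISat_eq_numCISat2_add_numCISat_induce_compl [Finite V] {x y : V}
    (hx : x ∈ ({y}ᶜ : Set V)) :
    numCISat H x = numCISat2 H x y + numCISat (H.induce {y}ᶜ) ⟨x, hx⟩ := by
  rw [numCISat_eq_of_embedding (Embedding.induce _), numCISat, numCISat2,
    ← natCard_subtype_and_add_natCard_subtype_and_not _ (y ∈ ·)]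
  have hrange : Set.range (Embedding.induce {y}ᶜ : H.induce {y}ᶜ ↪g H) = {y}ᶜ :=
    Subtype.range_coe
  congr 1 <;> refine Nat.card_congr (Equiv.subtypeEquivRight fun s => ?_)
  · tauto
  · rw [hrange, Set.subset_compl_singleton_iff, mem_coe]
    tauto

end Deletion

/-- If `G` is obtained from `H` by attaching a pendant edge at `y`, and `G'` by
attaching a pendant edge at `x`, then
`N(G') - N(G) = N(H)_x - N(H)_y = N(H-y)_x - N(H-x)_y`. -/
theorem numCIS_pendant_move {V : Type*} [Fintype V] (H : SimpleGraph V)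
    (x y : V) (hxy : x ≠ y) :
    ((numCIS (attachPath H x 1) : ℤ) - numCIS (attachPath H y 1) =
      (numCISat H x : ℤ) - numCISat H y) ∧
    ((numCISat H x : ℤ) - numCISat H y =
      (numCISat (H.induce ({y}ᶜ : Set V)) ⟨x, by simp [hxy]⟩ : ℤ) -
        numCISat (H.induce ({x}ᶜ : Set V)) ⟨y, by simp [hxy.symm]⟩) := by
  constructor
  · rw [numCIS_attachPath_one, numCIS_attachPath_one]
    push_cast
    ring
  · rw [numCISat_eq_numCISat2_add_numCISat_induce_compl H (Set.mem_compl_singleton_iff.2 hxy),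
      numCISat_eq_numCISat2_add_numCISat_induce_compl H (Set.mem_compl_singleton_iff.2 hxy.symm),
      numCISat2_comm H y x]
    push_cast
    ring
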